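/- Let R be a tree on at least two vertices with a distinguished root r whose degree in R is at least 2, and let b > a > 1 be integers. Then TW(T_{a,b}) = TW(T_{a-1,b+1}), where for nonnegative integers s,t the tree T_{s,t} is obtained from R by attaching at r two new vertex-disjoint paths r–u_1–u_2–⋯–u_s and r–v_1–v_2–⋯–v_t. -/

import Mathlib

open Finset

/-- The pendent vertices of a graph on a finite vertex type: the vertices of degree 1. -/
noncomputable def pendentFinset {V : Type*} [Fintype V] (G : SimpleGraph V) : Finset V := by
  classical exact univ.filter (fun v => G.degree v = 1)

/-- The terminal Wiener index of a graph: the sum of the distances over all unordered pairs of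
pendent vertices, i.e. half of the sum over all ordered pairs of pendent vertices. -/
noncomputable def terminalWienerIndex {V : Type*} [Fintype V] (G : SimpleGraph V) : ℕ :=
  (∑ u ∈ pendentFinset G, ∑ v ∈ pendentFinset G, G.dist u v) / 2

/-- `T_{s,t}`: the tree obtained from a tree `R` with distinguished root `r` by attaching at
`r` two new vertex-disjoint paths `r–u₁–⋯–u_s` and `r–v₁–⋯–v_t` (the path being empty if
`s = 0`, resp. `t = 0`). -/
def pathTree {V : Type*} (R : SimpleGraph V) (r : V) (s t : ℕ) :
    SimpleGraph (V ⊕ (Fin s ⊕ Fin t)) :=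
  SimpleGraph.fromRel (fun x y =>
    (∃ a b : V, x = Sum.inl a ∧ y = Sum.inl b ∧ R.Adj a b) ∨
    (∃ h : 0 < s, x = Sum.inl r ∧ y = Sum.inr (Sum.inl ⟨0, h⟩)) ∨
    (∃ i j : Fin s, x = Sum.inr (Sum.inl i) ∧ y = Sum.inr (Sum.inl j) ∧ (j : ℕ) = (i : ℕ) + 1) ∨
    (∃ h : 0 < t, x = Sum.inl r ∧ y = Sum.inr (Sum.inr ⟨0, h⟩)) ∨
    (∃ i j : Fin t, x = Sum.inr (Sum.inr i) ∧ y = Sum.inr (Sum.inr j) ∧ (j : ℕ) = (i : ℕ) + 1))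

/-!
For `s, t ≥ 1` the pendent vertices of `T_{s,t}` are the two path ends `u_s`, `v_t` and the
leaves of `R` other than `r`. A vertex of `T_{s,t}` hangs at a foot in `R` at some depth, and
`d(x, y) = d_R(x, foot y) + depth y` for `x ∈ R`, while `d(u_s, v_t) = s + t`: walks through the
feet give the upper bounds, and potentials that change by at most one along each edge give the
lower bounds. Summing over pairs of pendent vertices, `s` and `t` enter only through `s + t`.
-/

open SimpleGraph

namespace SimpleGraph

variable {W : Type*} {G : SimpleGraph W}

theorem Walk.le_add_length {f : W → ℤ} (hf : ∀ x y, G.Adj x y → f y ≤ f x + 1) {u v : W}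
    (p : G.Walk u v) : f v ≤ f u + p.length := by
  induction p with
  | nil => simp
  | cons h _ ih => have := hf _ _ h; push_cast [Walk.length_cons]; linarith

theorem Reachable.le_add_dist {f : W → ℤ} (hf : ∀ x y, G.Adj x y → f y ≤ f x + 1) {u v : W}
    (h : G.Reachable u v) : f v ≤ f u + G.dist u v := by
  obtain ⟨p, hp⟩ := h.exists_walk_length_eq_dist
  exact hp ▸ p.le_add_length hf

theorem not_existsUnique_adj {x y z : W} (hy : G.Adj x y) (hz : G.Adj x z) (hyz : y ≠ z) :
    ¬∃! w, G.Adj x w :=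
  fun ⟨_, _, hw⟩ => hyz ((hw y hy).trans (hw z hz).symm)

end SimpleGraph

theorem mem_pendentFinset {W : Type*} [Fintype W] {G : SimpleGraph W} {x : W} :
    x ∈ pendentFinset G ↔ ∃! y, G.Adj x y := by
  simp [pendentFinset, degree_eq_one_iff_existsUnique_adj]

namespace pathTree

variable {V : Type*} {R : SimpleGraph V} {r : V} {s t : ℕ}

@[simp] lemma adj_inl_inl {a b : V} : (pathTree R r s t).Adj (.inl a) (.inl b) ↔ R.Adj a b := by
  simp [pathTree, R.adj_comm b a, and_iff_right_of_imp Adj.ne]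

@[simp] lemma adj_inl_u {a : V} {i : Fin s} :
    (pathTree R r s t).Adj (.inl a) (.inr (.inl i)) ↔ a = r ∧ (i : ℕ) = 0 := by
  simpa [pathTree, Fin.ext_iff] using fun _ _ => i.pos

@[simp] lemma adj_inl_v {a : V} {j : Fin t} :
    (pathTree R r s t).Adj (.inl a) (.inr (.inr j)) ↔ a = r ∧ (j : ℕ) = 0 := by
  simpa [pathTree, Fin.ext_iff] using fun _ _ => j.pos

@[simp] lemma adj_u_u {i i' : Fin s} :
    (pathTree R r s t).Adj (.inr (.inl i)) (.inr (.inl i')) ↔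
      (i' : ℕ) = i + 1 ∨ (i : ℕ) = i' + 1 := by
  grind [pathTree, fromRel_adj, Fin.ext_iff]

@[simp] lemma adj_v_v {j j' : Fin t} :
    (pathTree R r s t).Adj (.inr (.inr j)) (.inr (.inr j')) ↔
      (j' : ℕ) = j + 1 ∨ (j : ℕ) = j' + 1 := by
  grind [pathTree, fromRel_adj, Fin.ext_iff]

@[simp] lemma not_adj_u_v {i : Fin s} {j : Fin t} :
    ¬(pathTree R r s t).Adj (.inr (.inl i)) (.inr (.inr j)) := by
  simp [pathTree]

@[simp] lemma adj_u_inl {a : V} {i : Fin s} :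
    (pathTree R r s t).Adj (.inr (.inl i)) (.inl a) ↔ a = r ∧ (i : ℕ) = 0 := by
  rw [adj_comm, adj_inl_u]

@[simp] lemma adj_v_inl {a : V} {j : Fin t} :
    (pathTree R r s t).Adj (.inr (.inr j)) (.inl a) ↔ a = r ∧ (j : ℕ) = 0 := by
  rw [adj_comm, adj_inl_v]

@[simp] lemma not_adj_v_u {i : Fin s} {j : Fin t} :
    ¬(pathTree R r s t).Adj (.inr (.inr j)) (.inr (.inl i)) := by
  rw [adj_comm]; exact not_adj_u_v

def foot (r : V) : V ⊕ (Fin s ⊕ Fin t) → V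
  | .inl a => a
  | .inr _ => r

-- `.inr (.inl i)` is the paper's `u_{i+1}`, and `.inr (.inr j)` its `v_{j+1}`.
def depth : V ⊕ (Fin s ⊕ Fin t) → ℕ
  | .inl _ => 0
  | .inr (.inl i) => i + 1
  | .inr (.inr j) => j + 1

@[simp] lemma foot_inl (a : V) : foot r (.inl a : V ⊕ (Fin s ⊕ Fin t)) = a := rfl

@[simp] lemma depth_inl (a : V) : depth (.inl a : V ⊕ (Fin s ⊕ Fin t)) = 0 := rfl

def signedDepth : V ⊕ (Fin s ⊕ Fin t) → ℤ
  | .inl _ => 0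
  | .inr (.inl i) => i + 1
  | .inr (.inr j) => -(j + 1)

lemma exists_walk_inl_inl {a b : V} (w : R.Walk a b) :
    ∃ w' : (pathTree R r s t).Walk (.inl a) (.inl b), w'.length = w.length := by
  induction w with
  | nil => exact ⟨.nil, rfl⟩
  | cons h _ ih =>
    obtain ⟨w', hw'⟩ := ih
    exact ⟨.cons (adj_inl_inl.2 h) w', by simp [hw']⟩

lemma exists_walk_root_u (i : ℕ) (hi : i < s) :
    ∃ w : (pathTree R r s t).Walk (.inl r) (.inr (.inl ⟨i, hi⟩)), w.length = i + 1 := by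
  induction i with
  | zero => exact ⟨(adj_inl_u.2 ⟨rfl, rfl⟩).toWalk, rfl⟩
  | succ i ih =>
    obtain ⟨w, hw⟩ := ih (by omega)
    exact ⟨w.concat (adj_u_u.2 (.inl rfl)), by simp [hw]⟩

lemma exists_walk_root_v (j : ℕ) (hj : j < t) :
    ∃ w : (pathTree R r s t).Walk (.inl r) (.inr (.inr ⟨j, hj⟩)), w.length = j + 1 := by
  induction j with
  | zero => exact ⟨(adj_inl_v.2 ⟨rfl, rfl⟩).toWalk, rfl⟩
  | succ j ih =>
    obtain ⟨w, hw⟩ := ih (by omega)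
    exact ⟨w.concat (adj_v_v.2 (.inl rfl)), by simp [hw]⟩

lemma exists_walk_from_foot (x : V ⊕ (Fin s ⊕ Fin t)) :
    ∃ w : (pathTree R r s t).Walk (.inl (foot r x)) x, w.length = depth x := by
  rcases x with a | ⟨i, hi⟩ | ⟨j, hj⟩
  · exact ⟨.nil, rfl⟩
  · exact exists_walk_root_u i hi
  · exact exists_walk_root_v j hj

lemma exists_walk_via_feet (hR : R.Connected) (x y : V ⊕ (Fin s ⊕ Fin t)) :
    ∃ w : (pathTree R r s t).Walk x y,
      w.length = depth x + R.dist (foot r x) (foot r y) + depth y := by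
  obtain ⟨wx, hwx⟩ := exists_walk_from_foot (R := R) (r := r) x
  obtain ⟨wy, hwy⟩ := exists_walk_from_foot (R := R) (r := r) y
  obtain ⟨w₀, hw₀⟩ := hR.exists_walk_length_eq_dist (foot r x) (foot r y)
  obtain ⟨w, hw⟩ := exists_walk_inl_inl (s := s) (t := t) (r := r) w₀
  refine ⟨wx.reverse.append (w.append wy), ?_⟩
  simp only [Walk.length_append, Walk.length_reverse, hwx, hwy, hw, hw₀, add_assoc]

lemma dist_foot_add_depth_le_of_adj (p : V) :
    ∀ x y, (pathTree R r s t).Adj x y →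
      (R.dist p (foot r y) + depth y : ℤ) ≤ R.dist p (foot r x) + depth x + 1 := by
  rintro (a | i | j) (b | i' | j') h <;> simp only [adj_inl_inl, adj_inl_u, adj_inl_v, adj_u_inl,
    adj_u_u, adj_v_inl, adj_v_v, not_adj_u_v, not_adj_v_u] at h <;> simp only [foot, depth]
  · rcases h.diff_dist_adj (u := p) with h | h | h <;> omega
  all_goals first | omega | (obtain ⟨rfl, _⟩ := h; omega)

lemma signedDepth_le_of_adj :
    ∀ x y, (pathTree R r s t).Adj x y → signedDepth y ≤ signedDepth x + 1 := by
  rintro (a | i | j) (b | i' | j') h <;> simp only [adj_inl_inl, adj_inl_u, adj_inl_v, adj_u_inl,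
    adj_u_u, adj_v_inl, adj_v_v, not_adj_u_v, not_adj_v_u] at h <;> simp only [signedDepth] <;> omega

theorem dist_inl (hR : R.Connected) (p : V) (y : V ⊕ (Fin s ⊕ Fin t)) :
    (pathTree R r s t).dist (.inl p) y = R.dist p (foot r y) + depth y := by
  obtain ⟨w, hw⟩ := exists_walk_via_feet (r := r) hR (.inl p) y
  have hle := dist_le w
  have hge := w.reachable.le_add_dist (dist_foot_add_depth_le_of_adj p)
  simp only [foot_inl, depth_inl, dist_self] at hw hge
  omega

theorem dist_inl_right (hR : R.Connected) (x : V ⊕ (Fin s ⊕ Fin t)) (p : V) :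
    (pathTree R r s t).dist x (.inl p) = R.dist p (foot r x) + depth x := by
  rw [dist_comm, dist_inl hR]

theorem dist_u_v (hR : R.Connected) (i : Fin s) (j : Fin t) :
    (pathTree R r s t).dist (.inr (.inl i)) (.inr (.inr j)) = i + j + 2 := by
  obtain ⟨w, hw⟩ := exists_walk_via_feet (r := r) hR (.inr (.inl i)) (.inr (.inr j))
  have hle := dist_le w
  have hge := w.reachable.symm.le_add_dist signedDepth_le_of_adj
  rw [dist_comm] at hge
  simp only [foot, depth, signedDepth, dist_self] at hw hge
  omega

theorem dist_v_u (hR : R.Connected) (i : Fin s) (j : Fin t) :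
    (pathTree R r s t).dist (.inr (.inr j)) (.inr (.inl i)) = i + j + 2 := by
  rw [dist_comm, dist_u_v hR]

lemma existsUnique_adj_inl_iff {p : V} (hp : p ≠ r) :
    (∃! y, (pathTree R r s t).Adj (.inl p) y) ↔ ∃! q, R.Adj p q := by
  simp [ExistsUnique, Sum.exists, Sum.forall, hp]

lemma not_existsUnique_adj_root (hs : 0 < s) (ht : 0 < t) :
    ¬∃! y, (pathTree R r s t).Adj (.inl r) y :=
  not_existsUnique_adj (adj_inl_u (i := ⟨0, hs⟩).2 ⟨rfl, rfl⟩)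
    (adj_inl_v (j := ⟨0, ht⟩).2 ⟨rfl, rfl⟩) (by simp)

lemma existsUnique_adj_u_iff (i : ℕ) (hi : i < s) :
    (∃! y, (pathTree R r s t).Adj (.inr (.inl ⟨i, hi⟩)) y) ↔ i + 1 = s := by
  constructor
  · intro h
    by_contra hne
    have hnext : (pathTree R r s t).Adj (.inr (.inl ⟨i, hi⟩)) (.inr (.inl ⟨i + 1, by omega⟩)) :=
      adj_u_u.2 (.inl rfl)
    rcases i with _ | k
    · exact not_existsUnique_adj hnext (adj_u_inl.2 ⟨rfl, rfl⟩) (by simp) h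
    · exact not_existsUnique_adj hnext (adj_u_u (i' := ⟨k, by omega⟩).2 (.inr rfl))
        (by grind) h
  · intro hs
    rcases i with _ | k
    · refine ⟨.inl r, adj_u_inl.2 ⟨rfl, rfl⟩, ?_⟩
      rintro (a | ⟨i', hi'⟩ | j') h
      · rw [(adj_u_inl.1 h).1]
      · have := adj_u_u.1 h
        omega
      · exact absurd h not_adj_u_v
    · refine ⟨.inr (.inl ⟨k, by omega⟩), adj_u_u.2 (.inr rfl), ?_⟩
      rintro (a | ⟨i', hi'⟩ | j') h
      · exact absurd (adj_u_inl.1 h).2 (by simp)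
      · have := adj_u_u.1 h
        simp only [Sum.inr.injEq, Sum.inl.injEq, Fin.mk.injEq] at this ⊢
        omega
      · exact absurd h not_adj_u_v

lemma existsUnique_adj_v_iff (j : ℕ) (hj : j < t) :
    (∃! y, (pathTree R r s t).Adj (.inr (.inr ⟨j, hj⟩)) y) ↔ j + 1 = t := by
  constructor
  · intro h
    by_contra hne
    have hnext : (pathTree R r s t).Adj (.inr (.inr ⟨j, hj⟩)) (.inr (.inr ⟨j + 1, by omega⟩)) :=
      adj_v_v.2 (.inl rfl)
    rcases j with _ | k
    · exact not_existsUnique_adj hnext (adj_v_inl.2 ⟨rfl, rfl⟩) (by simp) h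
    · exact not_existsUnique_adj hnext (adj_v_v (j' := ⟨k, by omega⟩).2 (.inr rfl))
        (by grind) h
  · intro ht
    rcases j with _ | k
    · refine ⟨.inl r, adj_v_inl.2 ⟨rfl, rfl⟩, ?_⟩
      rintro (a | i' | ⟨j', hj'⟩) h
      · rw [(adj_v_inl.1 h).1]
      · exact absurd h not_adj_v_u
      · have := adj_v_v.1 h
        omega
    · refine ⟨.inr (.inr ⟨k, by omega⟩), adj_v_v.2 (.inr rfl), ?_⟩
      rintro (a | i' | ⟨j', hj'⟩) h
      · exact absurd (adj_v_inl.1 h).2 (by simp)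
      · exact absurd h not_adj_v_u
      · have := adj_v_v.1 h
        simp only [Sum.inr.injEq, Fin.mk.injEq] at this ⊢
        omega

end pathTree

open pathTree

theorem pendentFinset_pathTree {V : Type*} [Fintype V] [DecidableEq V] (R : SimpleGraph V)
    (r : V) (s t : ℕ) :
    pendentFinset (pathTree R r (s + 1) (t + 1)) =
      ((pendentFinset R).erase r).disjSum (({Fin.last s} : Finset _).disjSum {Fin.last t}) := by
  ext (p | ⟨i, hi⟩ | ⟨j, hj⟩)
  · by_cases hp : p = r
    · subst hp
      simp [mem_pendentFinset, not_existsUnique_adj_root]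
    · simp [mem_pendentFinset, existsUnique_adj_inl_iff hp, hp]
  · simp [mem_pendentFinset, existsUnique_adj_u_iff, Fin.ext_iff]
  · simp [mem_pendentFinset, existsUnique_adj_v_iff, Fin.ext_iff]

theorem sum_dist_pendentFinset_pathTree {V : Type*} [Fintype V] [DecidableEq V]
    {R : SimpleGraph V} (hR : R.Connected) (r : V) (s t : ℕ) :
    ∑ x ∈ pendentFinset (pathTree R r (s + 1) (t + 1)),
      ∑ y ∈ pendentFinset (pathTree R r (s + 1) (t + 1)), (pathTree R r (s + 1) (t + 1)).dist x y =
    ∑ p ∈ (pendentFinset R).erase r, ∑ q ∈ (pendentFinset R).erase r, R.dist p q +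
      4 * ∑ p ∈ (pendentFinset R).erase r, R.dist p r +
      (2 * #((pendentFinset R).erase r) + 2) * (s + t + 2) := by
  simp only [pendentFinset_pathTree, sum_disjSum, sum_singleton, dist_inl hR]
  simp only [dist_inl_right hR, dist_u_v hR, dist_v_u hR, dist_self, foot, depth, Fin.val_last,
    sum_add_distrib, sum_const, smul_eq_mul]
  ring

theorem terminalWienerIndex_pathTree_eq_of_add_eq {V : Type*} [Fintype V] {R : SimpleGraph V}
    (hR : R.Connected) (r : V) {s t s' t' : ℕ} (h : s + t = s' + t') :
    terminalWienerIndex (pathTree R r (s + 1) (t + 1)) =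
      terminalWienerIndex (pathTree R r (s' + 1) (t' + 1)) := by
  classical
  simp only [terminalWienerIndex, sum_dist_pendentFinset_pathTree hR, h]

theorem terminal_wiener_index_pathTree_eq_general {V : Type*} [Fintype V] (R : SimpleGraph V)
    (r : V) (hR : R.IsTree) (a b : ℕ) (ha : 1 < a) (hab : a < b) :
    terminalWienerIndex (pathTree R r a b) = terminalWienerIndex (pathTree R r (a - 1) (b + 1)) := by
  obtain ⟨s, rfl⟩ : ∃ s, a = s + 1 + 1 := ⟨a - 2, by omega⟩
  obtain ⟨t, rfl⟩ : ∃ t, b = t + 1 := ⟨b - 1, by omega⟩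
  rw [Nat.add_sub_cancel]
  exact terminalWienerIndex_pathTree_eq_of_add_eq hR.connected r (by omega)

/-- Let `R` be a tree on at least two vertices whose root `r` has degree at least `2`, and let
`b > a > 1`. Then `TW(T_{a,b}) = TW(T_{a-1,b+1})`. -/
theorem terminal_wiener_index_pathTree_eq {V : Type*} [Fintype V] (R : SimpleGraph V)
    [DecidableRel R.Adj] (r : V) (hR : R.IsTree) (hcard : 2 ≤ Fintype.card V)
    (hdeg : 2 ≤ R.degree r) (a b : ℕ) (ha : 1 < a) (hab : a < b) :
    terminalWienerIndex (pathTree R r a b) = terminalWienerIndex (pathTree R r (a - 1) (b + 1)) :=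
  terminal_wiener_index_pathTree_eq_general R r hR a b ha hab
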